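/- The set of totient values has density zero: V(x)/x → 0 as x → ∞, i.e., for every ε > 0 there exists X such that for all real x ≥ X, the number of totient values ≤ x is at most ε·x. -/

import Mathlib

/-!
If `2 ^ k ∤ φ n` then `n` has at most `k` prime factors (each odd one contributes a factor `2` to
`φ n`), so `n ≤ 2 ^ k φ n`. Hence a totient value `m ≤ x` is either a multiple of `2 ^ k`, or
`φ n` for some `n ≤ 2 ^ k x` divisible by at most `k` of the primes of a finite set `P`. There are
at most `x / 2 ^ k` values of the first kind, and by the Turán–Kubilius second-moment bound at most
`O(2 ^ k x / S)` of the second, where `S = ∑_{p ∈ P} 1/p` can be made arbitrarily large since the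
prime reciprocals diverge.
-/

open Finset

namespace Nat

theorem prod_primeFactors_sub_one_dvd_totient (n : ℕ) :
    ∏ p ∈ n.primeFactors, (p - 1) ∣ φ n := by
  rcases eq_or_ne n 0 with rfl | hn
  · simp
  rw [totient_eq_prod_factorization hn, Finsupp.prod, support_factorization]
  exact prod_dvd_prod_of_dvd _ _ fun p _ => Dvd.intro_left _ rfl

theorem two_pow_card_primeFactors_erase_two_dvd_totient (n : ℕ) :
    2 ^ #(n.primeFactors.erase 2) ∣ φ n := by
  rw [← prod_const]
  refine (prod_dvd_prod_of_dvd _ _ fun p hp => ?_).trans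
    ((prod_dvd_prod_of_subset _ _ _ (erase_subset 2 _)).trans
      (prod_primeFactors_sub_one_dvd_totient n))
  obtain ⟨hp2, hp⟩ := mem_erase.mp hp
  exact ((prime_of_mem_primeFactors hp).even_sub_one hp2).two_dvd

theorem card_primeFactors_le_of_not_two_pow_dvd_totient {n k : ℕ} (h : ¬2 ^ k ∣ φ n) :
    #n.primeFactors ≤ k := by
  have hlt : #(n.primeFactors.erase 2) < k := by
    by_contra! hk
    exact h ((pow_dvd_pow 2 hk).trans (two_pow_card_primeFactors_erase_two_dvd_totient n))
  have := pred_card_le_card_erase (s := n.primeFactors) (a := 2)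
  omega

theorem le_two_pow_card_primeFactors_mul_totient (n : ℕ) :
    n ≤ 2 ^ #n.primeFactors * φ n := by
  have hpos : 0 < ∏ p ∈ n.primeFactors, (p - 1) :=
    prod_pos fun p hp => Nat.sub_pos_of_lt (prime_of_mem_primeFactors hp).one_lt
  refine le_of_mul_le_mul_right ?_ hpos
  calc n * ∏ p ∈ n.primeFactors, (p - 1) = φ n * ∏ p ∈ n.primeFactors, p :=
        (totient_mul_prod_primeFactors n).symm
    _ ≤ φ n * ∏ p ∈ n.primeFactors, 2 * (p - 1) := by
        gcongr with p hp
        have := (prime_of_mem_primeFactors hp).two_le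
        omega
    _ = 2 ^ #n.primeFactors * φ n * ∏ p ∈ n.primeFactors, (p - 1) := by
        rw [prod_mul_distrib, prod_const]; ring

end Nat

theorem exists_sum_primesBelow_one_div_ge (B : ℝ) :
    ∃ y, B ≤ ∑ p ∈ Nat.primesBelow y, (1 : ℝ) / p := by
  have hnonneg : ∀ n, 0 ≤ {p | Nat.Prime p}.indicator (fun n : ℕ => (1 : ℝ) / n) n :=
    fun n => Set.indicator_nonneg (fun _ _ => by positivity) n
  obtain ⟨y, hy⟩ := (((not_summable_iff_tendsto_nat_atTop_of_nonneg hnonneg).mp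
    not_summable_one_div_on_primes).eventually_ge_atTop B).exists
  refine ⟨y, hy.trans_eq ?_⟩
  rw [Nat.primesBelow, sum_filter]
  exact sum_congr rfl fun n _ => Set.indicator_apply _ _ _

section PrimeDivisorCount

variable (P : Finset ℕ) (N : ℕ)

theorem sum_card_filter_dvd_Ioc :
    ∑ n ∈ Ioc 0 N, #{p ∈ P | p ∣ n} = ∑ p ∈ P, N / p := by
  simp_rw [card_filter]
  rw [sum_comm]
  exact sum_congr rfl fun p _ => by rw [← card_filter, Nat.Ioc_filter_dvd_card_eq_div]

theorem sum_sq_card_filter_dvd_Ioc :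
    ∑ n ∈ Ioc 0 N, #{p ∈ P | p ∣ n} ^ 2 = ∑ p ∈ P, ∑ q ∈ P, N / Nat.lcm p q := by
  simp_rw [card_filter, sq, sum_mul_sum, ite_zero_mul_ite_zero, mul_one, ← Nat.lcm_dvd_iff]
  rw [sum_comm]
  refine sum_congr rfl fun p _ => ?_
  rw [sum_comm]
  exact sum_congr rfl fun q _ => by rw [← card_filter, Nat.Ioc_filter_dvd_card_eq_div]

theorem mul_sum_one_div_sub_card_le_sum_div :
    (N : ℝ) * ∑ p ∈ P, (1 : ℝ) / p - #P ≤ ∑ p ∈ P, ((N / p : ℕ) : ℝ) := by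
  rw [mul_sum, card_eq_sum_ones, Nat.cast_sum, ← sum_sub_distrib]
  refine sum_le_sum fun p _ => ?_
  rw [← Nat.floor_div_eq_div (K := ℝ), mul_one_div, Nat.cast_one]
  exact (Nat.sub_one_lt_floor _).le

variable {P}

theorem sum_sum_div_lcm_le (hP : ∀ p ∈ P, p.Prime) :
    ∑ p ∈ P, ∑ q ∈ P, ((N / Nat.lcm p q : ℕ) : ℝ)
      ≤ N * (∑ p ∈ P, (1 : ℝ) / p) ^ 2 + N * ∑ p ∈ P, (1 : ℝ) / p := by
  have hterm : ∀ p ∈ P, ∀ q ∈ P,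
      ((N / Nat.lcm p q : ℕ) : ℝ)
        ≤ N * ((1 : ℝ) / p * (1 / q)) + if p = q then N * ((1 : ℝ) / p) else 0 := by
    intro p hp q hq
    refine Nat.cast_div_le.trans ?_
    by_cases hpq : p = q
    · subst hpq
      rw [Nat.lcm_self, if_pos rfl, ← mul_one_div]
      exact le_add_of_nonneg_left (by positivity)
    · rw [((Nat.coprime_primes (hP p hp) (hP q hq)).mpr hpq).lcm_eq_mul, if_neg hpq, add_zero]
      push_cast
      apply le_of_eq
      field_simp
  refine (sum_le_sum fun p hp => sum_le_sum fun q hq => hterm p hp q hq).trans_eq ?_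
  simp_rw [sum_add_distrib, sum_ite_eq]
  rw [sum_congr rfl fun p hp => if_pos hp, ← mul_sum, sq, sum_mul_sum, mul_sum]
  simp_rw [mul_sum]

theorem card_filter_card_dvd_le_mul_sq_le (hP : ∀ p ∈ P, p.Prime) {k : ℕ}
    (hk : k ≤ ∑ p ∈ P, (1 : ℝ) / p) :
    #{n ∈ Ioc 0 N | #{p ∈ P | p ∣ n} ≤ k} * (∑ p ∈ P, (1 : ℝ) / p - k) ^ 2
      ≤ N * ∑ p ∈ P, (1 : ℝ) / p + 2 * (∑ p ∈ P, (1 : ℝ) / p) * #P := by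
  set S := ∑ p ∈ P, (1 : ℝ) / p
  set f : ℕ → ℝ := fun n => #{p ∈ P | p ∣ n}
  have first_moment : N * S - #P ≤ ∑ n ∈ Ioc 0 N, f n := by
    have := mul_sum_one_div_sub_card_le_sum_div P N
    rwa [← Nat.cast_sum, ← sum_card_filter_dvd_Ioc, Nat.cast_sum] at this
  have second_moment : ∑ n ∈ Ioc 0 N, f n ^ 2 ≤ N * S ^ 2 + N * S := by
    have := sum_sum_div_lcm_le N hP
    simp_rw [← Nat.cast_sum, ← sum_sq_card_filter_dvd_Ioc, Nat.cast_sum, Nat.cast_pow] at this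
    exact this
  have variance : ∑ n ∈ Ioc 0 N, (S - f n) ^ 2 ≤ N * S + 2 * S * #P := by
    simp_rw [sub_sq, sum_add_distrib, sum_sub_distrib, sum_const, Nat.card_Ioc, Nat.sub_zero,
      nsmul_eq_mul, ← mul_sum]
    have hS : 0 ≤ S := (Nat.cast_nonneg k).trans hk
    nlinarith [mul_le_mul_of_nonneg_left first_moment hS]
  -- Chebyshev: `n` with at most `k` divisors in `P` deviates from the mean `S` by at least `S - k`.
  calc #{n ∈ Ioc 0 N | #{p ∈ P | p ∣ n} ≤ k} * (S - k) ^ 2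
      ≤ ∑ n ∈ Ioc 0 N with #{p ∈ P | p ∣ n} ≤ k, (S - f n) ^ 2 := by
        rw [← nsmul_eq_mul]
        refine card_nsmul_le_sum _ _ _ fun n hn => ?_
        have : f n ≤ k := Nat.cast_le.mpr (mem_filter.mp hn).2
        gcongr
    _ ≤ ∑ n ∈ Ioc 0 N, (S - f n) ^ 2 :=
        sum_le_sum_of_subset_of_nonneg (filter_subset _ _) fun _ _ _ => sq_nonneg _
    _ ≤ N * S + 2 * S * #P := variance

end PrimeDivisorCount

theorem ncard_totient_values_le {P : Finset ℕ} (hP : ∀ p ∈ P, p.Prime) (k M : ℕ) :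
    {m : ℕ | (∃ n : ℕ, 1 ≤ n ∧ Nat.totient n = m) ∧ m ≤ M}.ncard
      ≤ M / 2 ^ k + #{n ∈ Ioc 0 (2 ^ k * M) | #{p ∈ P | p ∣ n} ≤ k} := by
  set F := {n ∈ Ioc 0 (2 ^ k * M) | #{p ∈ P | p ∣ n} ≤ k}
  have hsub : {m : ℕ | (∃ n : ℕ, 1 ≤ n ∧ Nat.totient n = m) ∧ m ≤ M}
      ⊆ ↑({m ∈ Ioc 0 M | 2 ^ k ∣ m} ∪ F.image Nat.totient) := by
    rintro _ ⟨⟨n, hn, rfl⟩, hnM⟩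
    have htot : 0 < n.totient := Nat.totient_pos.mpr hn
    simp only [coe_union, coe_filter, coe_image, Set.mem_union, Set.mem_ofPred_eq, mem_Ioc,
      Set.mem_image, mem_coe]
    by_cases hdvd : 2 ^ k ∣ n.totient
    · exact .inl ⟨⟨htot, hnM⟩, hdvd⟩
    have hω := Nat.card_primeFactors_le_of_not_two_pow_dvd_totient hdvd
    have hnN : n ≤ 2 ^ k * M := calc
      n ≤ 2 ^ #n.primeFactors * n.totient := Nat.le_two_pow_card_primeFactors_mul_totient n
      _ ≤ 2 ^ k * M := Nat.mul_le_mul (Nat.pow_le_pow_right two_pos hω) hnM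
    have hPn : {p ∈ P | p ∣ n} ⊆ n.primeFactors := fun p hp =>
      Nat.mem_primeFactors.mpr ⟨hP p (mem_filter.mp hp).1, (mem_filter.mp hp).2, by omega⟩
    exact .inr ⟨n, mem_filter.mpr ⟨mem_Ioc.mpr ⟨hn, hnN⟩, (card_le_card hPn).trans hω⟩, rfl⟩
  calc _ ≤ #({m ∈ Ioc 0 M | 2 ^ k ∣ m} ∪ F.image Nat.totient) := by
        rw [← Set.ncard_coe_finset]; exact Set.ncard_le_ncard hsub (finite_toSet _)
    _ ≤ #{m ∈ Ioc 0 M | 2 ^ k ∣ m} + #F :=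
        (card_union_le _ _).trans (Nat.add_le_add_left card_image_le _)
    _ = M / 2 ^ k + #F := by rw [Nat.Ioc_filter_dvd_card_eq_div]

theorem ncard_totient_values_le_div_add {P : Finset ℕ} (hP : ∀ p ∈ P, p.Prime) {k : ℕ}
    (hS : 0 < ∑ p ∈ P, (1 : ℝ) / p) (hkS : 2 * k ≤ ∑ p ∈ P, (1 : ℝ) / p) {x : ℝ} (hx : 0 ≤ x) :
    ({m : ℕ | (∃ n : ℕ, 1 ≤ n ∧ Nat.totient n = m) ∧ (m : ℝ) ≤ x}.ncard : ℝ)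
      ≤ x / 2 ^ k + 4 * (2 ^ k * x + 2 * #P) / ∑ p ∈ P, (1 : ℝ) / p := by
  set S := ∑ p ∈ P, (1 : ℝ) / p
  set M := ⌊x⌋₊
  set F := {n ∈ Ioc 0 (2 ^ k * M) | #{p ∈ P | p ∣ n} ≤ k}
  have hMx : (M : ℝ) ≤ x := Nat.floor_le hx
  have hset : {m : ℕ | (∃ n : ℕ, 1 ≤ n ∧ Nat.totient n = m) ∧ (m : ℝ) ≤ x}
      = {m : ℕ | (∃ n : ℕ, 1 ≤ n ∧ Nat.totient n = m) ∧ m ≤ M} := by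
    ext m; exact and_congr_right' (Nat.le_floor_iff hx).symm
  have hmultiples : ((M / 2 ^ k : ℕ) : ℝ) ≤ x / 2 ^ k := by
    refine Nat.cast_div_le.trans ?_
    push_cast
    gcongr
  have hF : (#F : ℝ) ≤ 4 * (2 ^ k * x + 2 * #P) / S := by
    have hturan := card_filter_card_dvd_le_mul_sq_le (2 ^ k * M) hP (k := k) (by linarith)
    push_cast at hturan
    have hsq : S ^ 2 / 4 ≤ (S - k) ^ 2 := by nlinarith
    rw [le_div_iff₀ hS]
    nlinarith [mul_le_mul_of_nonneg_left hsq (Nat.cast_nonneg (#F)),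
      mul_le_mul_of_nonneg_left hMx (by positivity : (0 : ℝ) ≤ 2 ^ k * S)]
  rw [hset]
  calc _ ≤ ((M / 2 ^ k : ℕ) : ℝ) + #F := by exact_mod_cast ncard_totient_values_le hP k M
    _ ≤ _ := add_le_add hmultiples hF

/-- The set of totient values has density zero: `V(x)/x → 0` as `x → ∞`, i.e., for every
`ε > 0` there exists `X` such that for all real `x ≥ X`, the number of totient values `≤ x` is
at most `ε·x`. -/
theorem totient_values_density_zero :
    ∀ ε : ℝ, 0 < ε → ∃ X : ℝ, ∀ x : ℝ, X ≤ x →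
      ({m : ℕ | (∃ n : ℕ, 1 ≤ n ∧ Nat.totient n = m) ∧ (m : ℝ) ≤ x}.ncard : ℝ) ≤ ε * x := by
  intro ε hε
  obtain ⟨k, hk⟩ := pow_unbounded_of_one_lt (3 / ε) one_lt_two
  obtain ⟨y, hy⟩ := exists_sum_primesBelow_one_div_ge (2 * k + 12 * 2 ^ k / ε)
  set P := Nat.primesBelow y
  set S := ∑ p ∈ P, (1 : ℝ) / p
  have hkS : 2 * k ≤ S := le_of_add_le_of_nonneg_left hy (by positivity)
  have hS : 12 * 2 ^ k / ε ≤ S := le_of_add_le_of_nonneg_right hy (by positivity)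
  have hS0 : 0 < S := lt_of_lt_of_le (by positivity) hS
  refine ⟨max 0 (24 * #P / (ε * S)), fun x hx => ?_⟩
  have hx0 : 0 ≤ x := le_of_max_le_left hx
  have hxP : 24 * #P / (ε * S) ≤ x := le_of_max_le_right hx
  rw [div_lt_iff₀ hε] at hk
  rw [div_le_iff₀ hε] at hS
  rw [div_le_iff₀ (by positivity)] at hxP
  calc _ ≤ x / 2 ^ k + 4 * (2 ^ k * x + 2 * #P) / S :=
        ncard_totient_values_le_div_add (fun _ => Nat.prime_of_mem_primesBelow) hS0 hkS hx0
    _ = x / 2 ^ k + 4 * 2 ^ k * x / S + 8 * #P / S := by ring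
    _ ≤ ε * x / 3 + ε * x / 3 + ε * x / 3 := by
        gcongr ?_ + ?_ + ?_
        · rw [div_le_iff₀ (by positivity)]; nlinarith
        · rw [div_le_iff₀ hS0]; nlinarith
        · rw [div_le_iff₀ hS0]; nlinarith
    _ = ε * x := by ring
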